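/- arXiv:2304.03455 — 3 statements merged into one kernel-verified Lean document; each statement's English description precedes it below -/
import Mathlib

section
/- For a Hausdorff space X, the hyperspace CL(X) with the locally finite topology is metrizable if and only if X is metrizable and the set of non-isolated points of X is compact. -/
open Set TopologicalSpace

/-- The hyperspace of nonempty closed subsets of `X`. -/
structure CL (X : Type*) [TopologicalSpace X] where
  carrier : Set X
  nonempty' : carrier.Nonempty
  isClosed' : IsClosed carrier

/-- A quasi-metric: like a metric but without symmetry. -/
def IsQuasiMetric {X : Type*} (d : X → X → ℝ) : Prop :=
  (∀ x y, 0 ≤ d x y) ∧ (∀ x y, d x y = 0 ↔ x = y) ∧ (∀ x y z, d x z ≤ d x y + d y z)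

/-- A space is quasi-metrizable if the balls of some quasi-metric generate its topology. -/
def QuasiMetrizable (X : Type*) [TopologicalSpace X] : Prop :=
  ∃ d : X → X → ℝ, IsQuasiMetric d ∧
    ∀ s : Set X, IsOpen s ↔ ∀ x ∈ s, ∃ ε > 0, {y | d x y < ε} ⊆ s

/-- The set of non-isolated points of `X`. -/
def NI (X : Type*) [TopologicalSpace X] : Set X := {x | ¬ IsOpen ({x} : Set X)}

/-- A subset is countably compact if every countable open cover has a finite subcover. -/
def CountablyCompactSet {Y : Type*} [TopologicalSpace Y] (s : Set Y) : Prop :=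
  ∀ f : ℕ → Set Y, (∀ n, IsOpen (f n)) → s ⊆ ⋃ n, f n → ∃ t : Finset ℕ, s ⊆ ⋃ n ∈ t, f n

/-- A space is hemicompact if some sequence of compact sets is cofinal in the compact sets. -/
def Hemicompact (X : Type*) [TopologicalSpace X] : Prop :=
  ∃ K : ℕ → Set X, (∀ n, IsCompact (K n)) ∧ ∀ L : Set X, IsCompact L → ∃ n, L ⊆ K n

/-- The locally finite topology on `CL X`: subbase `V⁺` for `V` open and `𝒰⁻` for `𝒰` a
locally finite family of open sets. -/
def locFinTop (X : Type*) [TopologicalSpace X] : TopologicalSpace (CL X) :=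
  generateFrom
    ({S | ∃ U : Set X, IsOpen U ∧ S = {A : CL X | A.carrier ⊆ U}} ∪
     {S | ∃ 𝒰 : Set (Set X), (∀ U ∈ 𝒰, IsOpen U) ∧
        LocallyFinite (fun U : 𝒰 => (U : Set X)) ∧
        S = {A : CL X | ∀ U ∈ 𝒰, (A.carrier ∩ U).Nonempty}})

noncomputable instance (X : Type*) [TopologicalSpace X] : TopologicalSpace (CL X) :=
  locFinTop X

/-!
Singletons embed `X` into `CL X`, so `X` is metrizable. If `NI X` were not compact, it would contain
an infinite set `{y n}` without accumulation points, isolated by a locally finite family of open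
sets `W n ∋ y n`. Moving `y n` slightly inside `W n` turns the `n`-th set of a countable
neighbourhood base of `{y n | n}` in `CL X` into a set missing `W n \ {q n}`, while the sets hitting
every `W n \ {q n}` form a neighbourhood of `{y n | n}`: `CL X` is not first countable.

Conversely, if `NI X` is compact, replace the metric `d` by `ρ x y = max (d x y) (min (f x) (f y))`
for `x ≠ y`, where `f` is the capped distance to `NI X`. It induces the same topology, and points
far from `NI X` are uniformly isolated for `ρ`. For such a metric the Hausdorff distance induces the
locally finite topology: open supersets of a closed set contain a uniform thickening of it, and a
locally finite open family hit by a closed set `A` is hit by all sets Hausdorff-close to `A`. So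
`CL X` embeds into the extended metric space `Closeds X`.
-/

open Filter Metric Topology
open scoped ENNReal

theorem LocallyFinite.isOpen_iInter {X ι : Type*} [TopologicalSpace X] {f : ι → Set X}
    (hfo : ∀ i, IsOpen (f i)) (hf : LocallyFinite f) : IsOpen (⋂ i, f i) := by
  rcases (⋂ i, f i).eq_empty_or_nonempty with h | ⟨x, hx⟩
  · exact h ▸ isOpen_empty
  -- a point of the intersection lies in every member, so there are only finitely many members
  have : Finite ι := by
    rw [← Set.finite_univ_iff]
    exact (hf.point_finite x).subset fun i _ => mem_iInter.1 hx i
  exact isOpen_iInter_of_finite hfo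

section NonIsolated

variable {X : Type*} [TopologicalSpace X]

theorem isClosed_NI : IsClosed (NI X) := by
  refine isOpen_compl_iff.1 (isOpen_iff_forall_mem_open.2 fun x hx => ⟨{x}, ?_, not_not.1 hx, rfl⟩)
  rintro y rfl
  exact hx

theorem exists_ne_mem_of_mem_NI {x : X} (hx : x ∈ NI X) {s : Set X} (hs : s ∈ 𝓝 x) :
    ∃ y ∈ s, y ≠ x := by
  by_contra! h
  refine hx (isOpen_iff_mem_nhds.2 fun y hy => ?_)
  rw [mem_singleton_iff.1 hy]
  exact mem_of_superset hs h

end NonIsolated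

namespace CL

variable {X : Type*} [TopologicalSpace X]

theorem carrier_injective : Function.Injective (carrier : CL X → Set X) := by
  rintro ⟨⟩ ⟨⟩ h
  congr

theorem isOpen_setOf_subset {V : Set X} (hV : IsOpen V) : IsOpen {A : CL X | A.carrier ⊆ V} :=
  GenerateOpen.basic _ (Or.inl ⟨V, hV, rfl⟩)

theorem isOpen_setOf_forall_inter_nonempty {ι : Type*} {f : ι → Set X} (hfo : ∀ i, IsOpen (f i))
    (hf : LocallyFinite f) : IsOpen {A : CL X | ∀ i, (A.carrier ∩ f i).Nonempty} := by
  have h : IsOpen {A : CL X | ∀ U ∈ range f, (A.carrier ∩ U).Nonempty} :=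
    GenerateOpen.basic _ (Or.inr ⟨range f, forall_mem_range.2 hfo, hf.on_range, rfl⟩)
  simpa only [forall_mem_range] using h

theorem continuous_of_isOpen_preimage {Y : Type*} [TopologicalSpace Y] {φ : Y → CL X}
    (h₁ : ∀ V, IsOpen V → IsOpen (φ ⁻¹' {A | A.carrier ⊆ V}))
    (h₂ : ∀ 𝒰 : Set (Set X), (∀ U ∈ 𝒰, IsOpen U) → LocallyFinite (fun U : 𝒰 => (U : Set X)) →
      IsOpen (φ ⁻¹' {A | ∀ U ∈ 𝒰, (A.carrier ∩ U).Nonempty})) :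
    Continuous φ := by
  refine continuous_generateFrom_iff.2 ?_
  rintro _ (⟨V, hV, rfl⟩ | ⟨𝒰, h𝒰o, h𝒰, rfl⟩)
  exacts [h₁ V hV, h₂ 𝒰 h𝒰o h𝒰]

variable [T1Space X]

def insertClosed (C : Set X) (hC : IsClosed C) (x : X) : CL X :=
  ⟨insert x C, insert_nonempty x C, by simpa only [insert_eq] using isClosed_singleton.union hC⟩

theorem continuous_insertClosed {C : Set X} (hC : IsClosed C) : Continuous (insertClosed C hC) := by
  refine continuous_of_isOpen_preimage (fun V hV => ?_) fun 𝒰 h𝒰o h𝒰 => ?_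
  · have : insertClosed C hC ⁻¹' {A | A.carrier ⊆ V} = V ∩ {_x | C ⊆ V} := by
      ext x; simp [insertClosed, insert_subset_iff]
    rw [this]
    exact hV.inter isOpen_const
  · -- only the members of `𝒰` that miss `C` constrain the inserted point
    have : insertClosed C hC ⁻¹' {A | ∀ U ∈ 𝒰, (A.carrier ∩ U).Nonempty} =
        ⋂ U : {U : 𝒰 // ¬ (C ∩ U).Nonempty}, (U : Set X) := by
      ext x
      simp only [insertClosed, mem_preimage, mem_ofPred_eq, mem_iInter]
      constructor
      · rintro h ⟨⟨U, hU⟩, hCU⟩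
        obtain ⟨y, rfl | hyC, hyU⟩ := h U hU
        exacts [hyU, absurd ⟨y, hyC, hyU⟩ hCU]
      · intro h U hU
        by_cases hCU : (C ∩ U).Nonempty
        · exact hCU.mono (inter_subset_inter_left _ (subset_insert _ _))
        · exact ⟨x, mem_insert _ _, h ⟨⟨U, hU⟩, hCU⟩⟩
    rw [this]
    exact LocallyFinite.isOpen_iInter (fun U => h𝒰o _ U.1.2)
      (h𝒰.comp_injective Subtype.val_injective)

theorem isEmbedding_insertClosed_empty : IsEmbedding (insertClosed (∅ : Set X) isClosed_empty) := by
  have hpre : ∀ V : Set X, insertClosed ∅ isClosed_empty ⁻¹' {A | A.carrier ⊆ V} = V := by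
    intro V; ext x; simp [insertClosed]
  refine ⟨⟨le_antisymm (continuous_iff_le_induced.1 (continuous_insertClosed _)) fun V hV => ?_⟩,
    fun x y h => by simpa [insertClosed] using congrArg carrier h⟩
  exact isOpen_induced_iff.2 ⟨_, isOpen_setOf_subset hV, hpre V⟩

theorem not_firstCountableTopology_of_locallyFinite {y : ℕ → X} (hy : ∀ n, y n ∈ NI X)
    {W : ℕ → Set X} (hWo : ∀ n, IsOpen (W n)) (hW : LocallyFinite W)
    (hyW : ∀ n, range y ∩ W n = {y n}) : ¬ FirstCountableTopology (CL X) := by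
  intro _
  have hyWn : ∀ n, y n ∈ W n := fun n => ((hyW n).ge (mem_singleton _)).2
  have hD : IsClosed (range y) := by
    rw [← iUnion_singleton_eq_range]
    exact (hW.subset fun n => singleton_subset_iff.2 (hyWn n)).isClosed_iUnion
      fun _ => isClosed_singleton
  have hDn : ∀ n, IsClosed (range y \ W n) := fun n => hD.sdiff (hWo n)
  have hinsert : ∀ n, insert (y n) (range y \ W n) = range y := by
    intro n
    rw [← sdiff_self_inter, hyW n, insert_sdiff_self_of_mem (mem_range_self n)]
  let A : CL X := ⟨range y, range_nonempty y, hD⟩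
  have hA : ∀ n, insertClosed _ (hDn n) (y n) = A := fun n => carrier_injective (hinsert n)
  obtain ⟨N, hN⟩ := (𝓝 A).exists_antitone_basis
  have hq : ∀ n, ∃ q ∈ W n ∩ insertClosed _ (hDn n) ⁻¹' N n, q ≠ y n := by
    intro n
    refine exists_ne_mem_of_mem_NI (hy n) (inter_mem ((hWo n).mem_nhds (hyWn n)) ?_)
    exact (continuous_insertClosed (hDn n)).continuousAt.preimage_mem_nhds (hA n ▸ hN.mem n)
  choose q hqWN hqy using hq
  have hS : IsOpen {B : CL X | ∀ n, (B.carrier ∩ (W n \ {q n})).Nonempty} :=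
    isOpen_setOf_forall_inter_nonempty (fun n => (hWo n).sdiff isClosed_singleton)
      (hW.subset fun _ => sdiff_subset)
  have hAS : A ∈ {B : CL X | ∀ n, (B.carrier ∩ (W n \ {q n})).Nonempty} :=
    fun n => ⟨y n, mem_range_self n, hyWn n, (hqy n).symm⟩
  obtain ⟨n, -, hn⟩ := hN.toHasBasis.mem_iff.1 (hS.mem_nhds hAS)
  obtain ⟨w, hw, hwW, hwq⟩ := hn (hqWN n).2 n
  rcases hw with rfl | ⟨-, hw⟩
  exacts [hwq rfl, hw hwW]

end CL

theorem exists_infinite_subset_forall_not_accPt {X : Type*} [TopologicalSpace X]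
    [MetrizableSpace X] {F : Set X} (hF : IsClosed F) (hFc : ¬ IsCompact F) :
    ∃ B ⊆ F, B.Infinite ∧ ∀ z, ¬ AccPt z (𝓟 B) := by
  rw [isCompact_iff_isSeqCompact, ← isCountablyCompact_iff_isSeqCompact,
    isCountablyCompact_iff_infinite_subset_has_accPt] at hFc
  push Not at hFc
  obtain ⟨B, hBF, hB, hacc⟩ := hFc
  refine ⟨B, hBF, hB, fun z hz => hacc z ?_ hz⟩
  exact hF.closure_subset_iff.2 hBF (mem_closure_iff_clusterPt.2 hz.clusterPt)

section Metric

variable {X : Type*} [MetricSpace X]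

theorem exists_ball_inter_subset_singleton_of_not_accPt {B : Set X} {z : X}
    (h : ¬ AccPt z (𝓟 B)) : ∃ δ > 0, ball z δ ∩ B ⊆ {z} := by
  rw [accPt_iff_nhds] at h
  push Not at h
  obtain ⟨U, hU, hUB⟩ := h
  obtain ⟨δ, hδ, hδU⟩ := Metric.mem_nhds_iff.1 hU
  exact ⟨δ, hδ, fun w hw => hUB w ⟨hδU hw.1, hw.2⟩⟩

/-- The balls shrink to `0`, so near a point `z` only balls around points of `B` close to `z`
matter, and there is at most one such point. -/
theorem Set.Infinite.exists_locallyFinite_isolating_balls {B : Set X} (hB : B.Infinite)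
    (hacc : ∀ z, ¬ AccPt z (𝓟 B)) :
    ∃ y : ℕ → X, (∀ n, y n ∈ B) ∧ ∃ W : ℕ → Set X, (∀ n, IsOpen (W n)) ∧ LocallyFinite W ∧
      ∀ n, range y ∩ W n = {y n} := by
  set y : ℕ → X := fun n => hB.natEmbedding B n
  have hy : Function.Injective y := Subtype.val_injective.comp (hB.natEmbedding B).injective
  have hyB : ∀ n, y n ∈ B := fun n => (hB.natEmbedding B n).2
  choose δ hδ hδB using fun n => exists_ball_inter_subset_singleton_of_not_accPt (hacc (y n))
  set ε : ℕ → ℝ := fun n => min (δ n) (1 / (n + 1))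
  refine ⟨y, hyB, fun n => ball (y n) (ε n), fun n => isOpen_ball, fun z => ?_, fun n => ?_⟩
  · obtain ⟨r, hr, hrB⟩ := exists_ball_inter_subset_singleton_of_not_accPt (hacc z)
    obtain ⟨N, hN⟩ := exists_nat_one_div_lt (half_pos hr)
    have hz : {n | y n = z}.Finite :=
      Set.Subsingleton.finite fun m (hm : y m = z) n (hn : y n = z) => hy (hm.trans hn.symm)
    refine ⟨ball z (r / 2), ball_mem_nhds z (half_pos hr), ((finite_Iio N).union hz).subset ?_⟩
    rintro n ⟨w, hwn, hwz⟩
    refine (lt_or_ge n N).imp id fun hNn => hrB ⟨?_, hyB n⟩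
    have hεn : ε n ≤ 1 / (N + 1) := (min_le_right _ _).trans (Nat.one_div_le_one_div hNn)
    rw [mem_ball] at hwn hwz ⊢
    calc dist (y n) z ≤ dist w (y n) + dist w z := dist_triangle_left _ _ _
      _ < r := by linarith
  · refine Subset.antisymm ?_ (singleton_subset_iff.2 ⟨mem_range_self n, mem_ball_self ?_⟩)
    · rintro _ ⟨⟨m, rfl⟩, hm⟩
      exact hδB n ⟨ball_subset_ball (min_le_left _ _) hm, hyB m⟩
    · exact lt_min (hδ n) Nat.one_div_pos_of_nat

end Metric

theorem isCompact_NI_of_firstCountableTopology_CL {X : Type*} [TopologicalSpace X]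
    [MetrizableSpace X] [FirstCountableTopology (CL X)] : IsCompact (NI X) := by
  by_contra hNI
  let _ := metrizableSpaceMetric X
  obtain ⟨B, hBNI, hB, hacc⟩ := exists_infinite_subset_forall_not_accPt isClosed_NI hNI
  obtain ⟨y, hyB, W, hWo, hW, hyW⟩ := hB.exists_locallyFinite_isolating_balls hacc
  exact CL.not_firstCountableTopology_of_locallyFinite (fun n => hBNI (hyB n)) hWo hW hyW ‹_›

section Metric

variable {X : Type*} [MetricSpace X]

theorem LocallyFinite.exists_thickening_finite {ι : Type*} {f : ι → Set X} (hf : LocallyFinite f)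
    {K : Set X} (hK : IsCompact K) :
    ∃ δ > 0, {i | (f i ∩ thickening δ K).Nonempty}.Finite := by
  choose N hN hNf using hf
  obtain ⟨t, -, hKt⟩ := hK.elim_nhds_subcover (fun x => interior (N x))
    fun x _ => interior_mem_nhds.2 (hN x)
  obtain ⟨δ, hδ, hδt⟩ :=
    hK.exists_thickening_subset_open (isOpen_biUnion fun _ _ => isOpen_interior) hKt
  refine ⟨δ, hδ, (t.finite_toSet.biUnion fun x _ => hNf x).subset ?_⟩
  rintro i ⟨z, hzi, hzK⟩
  obtain ⟨x, hx, hzx⟩ := mem_iUnion₂.1 (hδt hzK)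
  exact mem_iUnion₂.2 ⟨x, hx, z, hzi, interior_subset hzx⟩

theorem exists_finite_subset_inter_thickening_subset {K : Set X} (hK : IsCompact K) (S : Set X)
    {r : ℝ} (hr : 0 < r) :
    ∃ F ⊆ S, F.Finite ∧ S ∩ thickening r K ⊆ thickening (4 * r) F := by
  obtain ⟨T, -, hT, hKT⟩ := finite_cover_balls_of_compact hK hr
  let T' : Set X := {t ∈ T | ∃ s ∈ S, dist s t < 2 * r}
  choose s hsS hst using fun t : T' => t.2.2
  have : Finite T' := (hT.subset (sep_subset _ _)).to_subtype
  refine ⟨range s, range_subset_iff.2 hsS, finite_range s, ?_⟩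
  rintro a ⟨haS, ha⟩
  obtain ⟨p, hpK, hap⟩ := mem_thickening_iff.1 ha
  obtain ⟨t, htT, hpt⟩ := mem_iUnion₂.1 (hKT hpK)
  rw [mem_ball] at hpt
  have hat : dist a t < 2 * r := by linarith [dist_triangle a p t]
  let t' : T' := ⟨t, htT, a, haS, hat⟩
  refine mem_thickening_iff.2 ⟨s t', mem_range_self t', ?_⟩
  linarith [dist_triangle_right a (s t') t, hst t']

end Metric

/-- Together with compactness of `NI X`, this is Atsuji's characterization of the metric spaces on
which every continuous function is uniformly continuous. -/
def UniformlyIsolatedAwayFromNI (X : Type*) [MetricSpace X] : Prop :=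
  ∀ ε > 0, ∃ δ > 0, ∀ x y : X, x ≠ y → dist x y < δ → x ∈ thickening ε (NI X)

namespace UniformlyIsolatedAwayFromNI

variable {X : Type*} [MetricSpace X] (hX : UniformlyIsolatedAwayFromNI X)
include hX

theorem isOpen_singleton {ε : ℝ} (hε : 0 < ε) {x : X} (hx : x ∉ thickening ε (NI X)) :
    IsOpen ({x} : Set X) := by
  obtain ⟨δ, hδ, hδX⟩ := hX ε hε
  refine Metric.isOpen_singleton_iff.2 ⟨δ, hδ, fun y hy => ?_⟩
  by_contra hyx
  exact hx (hδX x y (Ne.symm hyx) (dist_comm y x ▸ hy))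

theorem locallyFinite_singleton {ε : ℝ} (hε : 0 < ε) {S : Set X}
    (hS : Disjoint S (thickening ε (NI X))) : LocallyFinite fun x : S => ({x.1} : Set X) := by
  obtain ⟨δ, hδ, hδX⟩ := hX ε hε
  refine fun z => ⟨ball z (δ / 2), ball_mem_nhds z (half_pos hδ), Set.Subsingleton.finite ?_⟩
  rintro x ⟨_, rfl, hxz⟩ y ⟨_, rfl, hyz⟩
  by_contra hxy
  refine disjoint_left.1 hS x.2 (hδX x y (fun h => hxy (Subtype.ext h)) ?_)
  rw [mem_ball] at hxz hyz
  linarith [dist_triangle_right (x : X) y z]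

variable (hc : IsCompact (NI X))
include hc

/-- Points of `A` close to `NI X` are close to the compact set `NI X ∩ A ⊆ V`; the other points of
`A` are isolated, uniformly so. -/
theorem exists_thickening_subset {A V : Set X} (hA : IsClosed A) (hV : IsOpen V) (hAV : A ⊆ V) :
    ∃ ε > 0, thickening ε A ⊆ V := by
  have hK : IsCompact (NI X ∩ A) := hc.inter_right hA
  obtain ⟨η, hη, hηV⟩ := hK.exists_thickening_subset_open hV (inter_subset_right.trans hAV)
  have hdisj : Disjoint (NI X) (A \ thickening (η / 2) (NI X ∩ A)) :=
    disjoint_left.2 fun x hx hxA =>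
      hxA.2 (self_subset_thickening (half_pos hη) _ ⟨hx, hxA.1⟩)
  obtain ⟨δ, hδ, hδdisj⟩ := hdisj.exists_thickenings hc (hA.sdiff isOpen_thickening)
  obtain ⟨γ, hγ, hγX⟩ := hX δ hδ
  refine ⟨min γ (η / 2), lt_min hγ (half_pos hη), fun x hx => ?_⟩
  obtain ⟨a, haA, hxa⟩ := mem_thickening_iff.1 hx
  rcases eq_or_ne a x with rfl | hax
  · exact hAV haA
  have ha : a ∈ thickening (η / 2) (NI X ∩ A) := by
    by_contra ha
    refine disjoint_left.1 hδdisj (hγX a x hax ?_)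
      (self_subset_thickening hδ _ ⟨haA, ha⟩)
    rw [dist_comm]
    exact hxa.trans_le (min_le_left _ _)
  refine hηV (thickening_thickening_subset (min γ (η / 2)) (η / 2) _ |>.trans
    (thickening_mono (by linarith [min_le_right γ (η / 2)]) _) ?_)
  exact mem_thickening_iff.2 ⟨a, ha, hxa⟩

theorem exists_forall_ball_subset {ι : Type*} {f : ι → Set X} (hfo : ∀ i, IsOpen (f i))
    (hf : LocallyFinite f) {A : Set X} (hA : ∀ i, (A ∩ f i).Nonempty) :
    ∃ ε > 0, ∀ i, ∃ a ∈ A, ball a ε ⊆ f i := by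
  obtain ⟨δ, hδ, hfin⟩ := hf.exists_thickening_finite hc
  obtain ⟨γ, hγ, hγX⟩ := hX δ hδ
  have hr : ∀ i, ∃ a ∈ A, ∃ r > 0, ball a r ⊆ f i := fun i =>
    let ⟨a, haA, hai⟩ := hA i
    ⟨a, haA, Metric.isOpen_iff.1 (hfo i) a hai⟩
  choose a haA r hr hball using hr
  -- only the finitely many members meeting `thickening δ (NI X)` need a small radius
  have hεγ : ∀ᶠ ε in 𝓝[>] (0 : ℝ), ε ∈ Ioc 0 γ := Ioc_mem_nhdsGT hγ
  have hεr : ∀ᶠ ε in 𝓝[>] (0 : ℝ), ∀ i ∈ {i | (f i ∩ thickening δ (NI X)).Nonempty},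
      ε ∈ Ioc 0 (r i) :=
    (eventually_all_finite hfin).2 fun i _ => Ioc_mem_nhdsGT (hr i)
  obtain ⟨ε, ⟨hε, hεγ⟩, hεr⟩ := (hεγ.and hεr).exists
  refine ⟨ε, hε, fun i => ?_⟩
  by_cases hi : (f i ∩ thickening δ (NI X)).Nonempty
  · exact ⟨a i, haA i, (ball_subset_ball (hεr i hi).2).trans (hball i)⟩
  obtain ⟨b, hbA, hbi⟩ := hA i
  refine ⟨b, hbA, fun y hy => ?_⟩
  by_contra hyi
  have hyb : b ≠ y := fun h => hyi (h ▸ hbi)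
  exact hi ⟨b, hbi, hγX b y hyb (mem_ball'.1 hy |>.trans_le hεγ)⟩

end UniformlyIsolatedAwayFromNI

namespace CL

variable {X : Type*} [MetricSpace X]

def toCloseds (A : CL X) : Closeds X := ⟨A.carrier, A.isClosed'⟩

theorem isOpen_induced_toCloseds {S : Set (CL X)}
    (h : ∀ A ∈ S, ∃ ε > 0, ∀ B : CL X,
      hausdorffEDist A.carrier B.carrier < ENNReal.ofReal ε → B ∈ S) :
    IsOpen[induced toCloseds inferInstance] S := by
  refine (@isOpen_iff_mem_nhds _ (induced toCloseds inferInstance) S).2 fun A hA => ?_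
  obtain ⟨ε, hε, hS⟩ := h A hA
  rw [nhds_induced]
  exact ⟨_, eball_mem_nhds (toCloseds A) (ENNReal.ofReal_pos.2 hε),
    fun B hB => hS B (by rwa [mem_preimage, mem_eball', Closeds.edist_eq] at hB)⟩

variable (hX : UniformlyIsolatedAwayFromNI X) (hc : IsCompact (NI X))
include hX hc

/-- The neighbourhood `O` of `A` is within Hausdorff distance `5 γ` of `A`: its members lie in the
`γ`-thickening of `A`, contain the (isolated) points of `A` far from `NI X`, and meet the `γ`-balls
around a finite net of the part of `A` near the compact set `NI X`. -/
theorem eventually_hausdorffEDist_lt (A : CL X) {ε : ℝ≥0∞} (hε : 0 < ε) :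
    ∀ᶠ B in 𝓝 A, hausdorffEDist A.carrier B.carrier < ε := by
  obtain ⟨r, -, hr, hrε⟩ := ENNReal.lt_iff_exists_real_btwn.1 hε
  obtain ⟨γ, hγ, hγr⟩ : ∃ γ > 0, 5 * γ < r :=
    ⟨r / 6, by linarith [ENNReal.ofReal_pos.1 hr], by linarith [ENNReal.ofReal_pos.1 hr]⟩
  obtain ⟨F, hFA, hF, hAF⟩ := exists_finite_subset_inter_thickening_subset hc A.carrier hγ
  have : Finite F := hF.to_subtype
  let far : Set X := A.carrier \ thickening γ (NI X)
  have hfar : Disjoint far (thickening γ (NI X)) := disjoint_sdiff_left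
  let O : Set (CL X) := {B | B.carrier ⊆ thickening γ A.carrier} ∩
    {B | ∀ x : far, (B.carrier ∩ {x.1}).Nonempty} ∩ {B | ∀ s : F, (B.carrier ∩ ball s γ).Nonempty}
  have hO : IsOpen O :=
    ((isOpen_setOf_subset isOpen_thickening).inter (isOpen_setOf_forall_inter_nonempty
      (fun x => hX.isOpen_singleton hγ (disjoint_left.1 hfar x.2))
      (hX.locallyFinite_singleton hγ hfar))).inter
      (isOpen_setOf_forall_inter_nonempty (fun _ => isOpen_ball) (locallyFinite_of_finite _))
  have hAO : A ∈ O := ⟨⟨self_subset_thickening hγ _, fun x => ⟨x, x.2.1, rfl⟩⟩,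
    fun s => ⟨s, hFA s.2, mem_ball_self hγ⟩⟩
  filter_upwards [hO.mem_nhds hAO] with B ⟨⟨hBA, hBfar⟩, hBF⟩
  refine (hausdorffEDist_le_of_mem_edist (r := ENNReal.ofReal (5 * γ)) (fun a ha => ?_)
    fun b hb => ?_).trans_lt ((ENNReal.ofReal_le_ofReal hγr.le).trans_lt hrε)
  · by_cases haN : a ∈ thickening γ (NI X)
    · obtain ⟨s, hs, has⟩ := mem_thickening_iff.1 (hAF ⟨ha, haN⟩)
      obtain ⟨b, hbB, hbs⟩ := hBF ⟨s, hs⟩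
      refine ⟨b, hbB, (edist_le_ofReal (by positivity)).2 ?_⟩
      linarith [dist_triangle a s b, mem_ball'.1 hbs]
    · obtain ⟨b, hbB, rfl⟩ := hBfar ⟨a, ha, haN⟩
      exact ⟨b, hbB, by simp⟩
  · obtain ⟨a, ha, hba⟩ := mem_thickening_iff.1 (hBA hb)
    exact ⟨a, ha, (edist_le_ofReal (by positivity)).2 (by linarith)⟩

theorem isEmbedding_toCloseds : IsEmbedding (toCloseds : CL X → Closeds X) := by
  refine ⟨⟨le_antisymm ?_ (le_generateFrom ?_)⟩,
    fun A B h => carrier_injective (congrArg SetLike.coe h)⟩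
  · refine continuous_iff_le_induced.1 (continuous_iff_continuousAt.2 fun A => ?_)
    refine EMetric.tendsto_nhds.2 fun ε hε => ?_
    filter_upwards [eventually_hausdorffEDist_lt hX hc A hε] with B hB
    rwa [Closeds.edist_eq, hausdorffEDist_comm]
  rintro _ (⟨V, hV, rfl⟩ | ⟨𝒰, h𝒰o, h𝒰, rfl⟩) <;> refine isOpen_induced_toCloseds fun A hA => ?_
  · obtain ⟨ε, hε, hεV⟩ := hX.exists_thickening_subset hc A.isClosed' hV hA
    refine ⟨ε, hε, fun B hB b hb => hεV ?_⟩
    rw [hausdorffEDist_comm] at hB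
    obtain ⟨a, ha, hba⟩ := exists_edist_lt_of_hausdorffEDist_lt hb hB
    exact mem_thickening_iff.2 ⟨a, ha, edist_lt_ofReal.1 hba⟩
  · obtain ⟨ε, hε, hε𝒰⟩ := hX.exists_forall_ball_subset hc (fun U : 𝒰 => h𝒰o U U.2) h𝒰
      fun U => hA U U.2
    refine ⟨ε, hε, fun B hB U hU => ?_⟩
    obtain ⟨a, ha, haU⟩ := hε𝒰 ⟨U, hU⟩
    obtain ⟨b, hb, hab⟩ := exists_edist_lt_of_hausdorffEDist_lt ha hB
    exact ⟨b, hb, haU (mem_ball'.2 (edist_lt_ofReal.1 hab))⟩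

theorem metrizableSpace_of_uniformlyIsolated : MetrizableSpace (CL X) :=
  (isEmbedding_toCloseds hX hc).metrizableSpace

end CL

section IsolationMetric

variable {X : Type*} [MetricSpace X]

open scoped Classical in
/-- Capped at `1`, and equal to `1` when `NI X` is empty, where `infDist` would give the junk
value `0`. -/
noncomputable def distNI (x : X) : ℝ := if (NI X).Nonempty then min (infDist x (NI X)) 1 else 1

theorem distNI_nonneg (x : X) : 0 ≤ distNI x := by
  unfold distNI
  split_ifs
  exacts [le_min infDist_nonneg zero_le_one, zero_le_one]

theorem distNI_le_add_dist (x y : X) : distNI x ≤ distNI y + dist x y := by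
  unfold distNI
  split_ifs
  · have := infDist_le_infDist_add_dist (x := x) (y := y) (s := NI X)
    simp only [min_def]
    split_ifs <;> linarith [dist_nonneg (x := x) (y := y), infDist_nonneg (x := y) (s := NI X)]
  · linarith [dist_nonneg (x := x) (y := y)]

theorem distNI_of_mem {x : X} (hx : x ∈ NI X) : distNI x = 0 := by
  rw [distNI, if_pos ⟨x, hx⟩, infDist_zero_of_mem hx, min_eq_left zero_le_one]

theorem distNI_pos {x : X} (hx : x ∉ NI X) : 0 < distNI x := by
  unfold distNI
  split_ifs with hNI
  exacts [lt_min ((isClosed_NI.notMem_iff_infDist_pos hNI).1 hx) one_pos, one_pos]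

theorem min_le_distNI {ε : ℝ} {x : X} (hx : x ∉ thickening ε (NI X)) : min ε 1 ≤ distNI x := by
  unfold distNI
  split_ifs with hNI
  · rw [mem_thickening_iff_infDist_lt hNI, not_lt] at hx
    exact min_le_min_right 1 hx
  · exact min_le_right ε 1

open scoped Classical in
noncomputable def isolationDist (x y : X) : ℝ :=
  if x = y then 0 else max (dist x y) (min (distNI x) (distNI y))

theorem isolationDist_self (x : X) : isolationDist x x = 0 := if_pos rfl

theorem isolationDist_comm (x y : X) : isolationDist x y = isolationDist y x := by
  unfold isolationDist
  by_cases h : x = y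
  · rw [if_pos h, if_pos h.symm]
  · rw [if_neg h, if_neg (Ne.symm h), dist_comm, min_comm]

theorem dist_le_isolationDist (x y : X) : dist x y ≤ isolationDist x y := by
  unfold isolationDist
  split_ifs with h
  exacts [(dist_eq_zero.2 h).le, le_max_left _ _]

theorem isolationDist_of_mem_NI {x : X} (hx : x ∈ NI X) (y : X) :
    isolationDist x y = dist x y := by
  unfold isolationDist
  split_ifs with h
  · rw [h, dist_self]
  · rw [distNI_of_mem hx, min_eq_left (distNI_nonneg y), max_eq_left dist_nonneg]

theorem half_distNI_le_isolationDist {x y : X} (h : x ≠ y) : distNI x / 2 ≤ isolationDist x y := by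
  rw [isolationDist, if_neg h]
  have := distNI_le_add_dist x y
  simp only [le_max_iff, le_min_iff]
  by_contra! h'
  linarith [h'.2 (half_le_self (distNI_nonneg x))]

theorem isolationDist_triangle (x y z : X) :
    isolationDist x z ≤ isolationDist x y + isolationDist y z := by
  by_cases hxz : x = z
  · rw [hxz, isolationDist_self]
    exact add_nonneg (dist_nonneg.trans (dist_le_isolationDist _ _))
      (dist_nonneg.trans (dist_le_isolationDist _ _))
  by_cases hxy : x = y
  · rw [hxy, isolationDist_self, zero_add]
  by_cases hyz : y = z
  · rw [hyz, isolationDist_self, add_zero]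
  rw [isolationDist, isolationDist, isolationDist, if_neg hxz, if_neg hxy, if_neg hyz]
  have := dist_triangle x y z
  have := distNI_le_add_dist x y
  have := distNI_le_add_dist z y
  have := dist_comm z y
  -- if `distNI y` is below both `distNI x` and `distNI z`, use `distNI x ≤ distNI y + dist x y`
  simp only [max_def, min_def]
  split_ifs <;> linarith [dist_nonneg (x := x) (y := y), dist_nonneg (x := y) (y := z)]

theorem isOpen_iff_isolationDist (s : Set X) :
    IsOpen s ↔ ∀ x ∈ s, ∃ ε > 0, ∀ y, isolationDist x y < ε → y ∈ s := by
  refine ⟨fun hs x hxs => ?_, fun h => isOpen_iff_mem_nhds.2 fun x hxs => ?_⟩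
  · by_cases hx : x ∈ NI X
    · obtain ⟨ε, hε, hball⟩ := Metric.isOpen_iff.1 hs x hxs
      refine ⟨ε, hε, fun y hy => hball ?_⟩
      rwa [mem_ball', ← isolationDist_of_mem_NI hx]
    · refine ⟨distNI x / 2, half_pos (distNI_pos hx), fun y hy => ?_⟩
      by_contra hys
      have hxy : x ≠ y := fun h => hys (h ▸ hxs)
      exact (half_distNI_le_isolationDist hxy).not_gt hy
  · obtain ⟨ε, hε, hεs⟩ := h x hxs
    by_cases hx : x ∈ NI X
    · refine mem_of_superset (ball_mem_nhds x hε) fun y hy => hεs y ?_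
      rwa [isolationDist_of_mem_NI hx, ← mem_ball']
    · exact mem_of_superset ((not_not.1 hx).mem_nhds rfl) (singleton_subset_iff.2 hxs)

theorem eq_of_isolationDist_eq_zero {x y : X} (h : isolationDist x y = 0) : x = y :=
  dist_le_zero.1 (h ▸ dist_le_isolationDist x y)

variable (X) in
noncomputable abbrev isolationMetric : MetricSpace X :=
  .ofDistTopology isolationDist isolationDist_self isolationDist_comm isolationDist_triangle
    isOpen_iff_isolationDist fun _ _ => eq_of_isolationDist_eq_zero

theorem uniformlyIsolatedAwayFromNI_isolationMetric :
    @UniformlyIsolatedAwayFromNI X (isolationMetric X) := by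
  intro ε hε
  refine ⟨min ε 1 / 2, by positivity, fun x y hxy h => ?_⟩
  change isolationDist x y < _ at h
  have hx : x ∈ thickening ε (NI X) := by
    by_contra hx
    linarith [min_le_distNI hx, half_distNI_le_isolationDist hxy]
  obtain ⟨p, hp, hxp⟩ := mem_thickening_iff.1 hx
  refine (@mem_thickening_iff _ _ (isolationMetric X).toPseudoMetricSpace _ _).2 ⟨p, hp, ?_⟩
  change isolationDist x p < ε
  rwa [isolationDist_comm, isolationDist_of_mem_NI hp, dist_comm]

end IsolationMetric

theorem metrizable_CL_locFin_iff {X : Type*} [TopologicalSpace X] [T2Space X] :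
    TopologicalSpace.MetrizableSpace (CL X) ↔
      (TopologicalSpace.MetrizableSpace X ∧ IsCompact (NI X)) := by
  refine ⟨fun _ => ?_, fun ⟨_, hNI⟩ => ?_⟩
  · have : MetrizableSpace X := CL.isEmbedding_insertClosed_empty.metrizableSpace
    exact ⟨this, isCompact_NI_of_firstCountableTopology_CL⟩
  · let _ := metrizableSpaceMetric X
    exact @CL.metrizableSpace_of_uniformlyIsolated X (isolationMetric X)
      uniformlyIsolatedAwayFromNI_isolationMetric hNI
end

section
/- For a Hausdorff space X, the hyperspace (CL(X), τ_locfin) is first-countable if and only if every nonempty closed subset of X has a countable neighborhood base in X (X is a D_1-space) and the subspace NI(X) of non-isolated points is hereditarily separable. -/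
open Set TopologicalSpace

/-- Every closed subset has a countable neighborhood base consisting of open sets. -/
def D1Space (X : Type*) [TopologicalSpace X] : Prop :=
  ∀ A : Set X, IsClosed A → A.Nonempty →
    ∃ B : ℕ → Set X, (∀ n, IsOpen (B n) ∧ A ⊆ B n) ∧
      ∀ U : Set X, IsOpen U → A ⊆ U → ∃ n, B n ⊆ U

/-- A subset is hereditarily separable if each of its subsets has a countable
relatively dense subset. -/
def HereditarilySeparable {X : Type*} [TopologicalSpace X] (A : Set X) : Prop :=
  ∀ s ⊆ A, ∃ c ⊆ s, c.Countable ∧ s ⊆ closure c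

/-! In a `D₁`-space a locally finite open family has only finitely many members meeting `NI X`:
otherwise pick non-isolated points `vₙ` in distinct members `Wₙ`; they form a closed set with a
countable outer base `Gₙ`, and non-isolation gives `qₙ ∈ Gₙ ∩ Wₙ` off `{vₘ}`. The set `{qₙ}` is
closed, so its complement is a neighbourhood of `{vₙ}` containing no `Gₙ`.

If `CL X` is first countable, pulling back along `x ↦ A ∪ {x}` shows `𝓝ˢ A` is countably generated,
and for `s ⊆ NI X` the finiteness fact makes the closures of finite subsets of `s` converge to
`closure s`, so a sequence of them yields a countable dense subset of `s`. Conversely, the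
neighbourhood filter of `A` is generated by the sets `U⁺` for `U` in a countable base of `𝓝ˢ A`,
the sets of closed sets hitting basic neighbourhoods of points of a countable dense subset of
`A ∩ NI X`, and the sets of closed sets containing `(A \ NI X) \ K` for `K` in a countable base of
the neighbourhoods of the boundary of the open discrete set `A \ NI X`.
-/

open Filter Topology

section

variable {X : Type*} [TopologicalSpace X]

namespace CL

theorem tendsto_nhds_iff {α : Type*} {m : α → CL X} {f : Filter α} {A : CL X} :
    Tendsto m f (𝓝 A) ↔
      (∀ U, IsOpen U → A.carrier ⊆ U → ∀ᶠ a in f, (m a).carrier ⊆ U) ∧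
      ∀ 𝒰 : Set (Set X), (∀ U ∈ 𝒰, IsOpen U) → LocallyFinite (fun U : 𝒰 => (U : Set X)) →
        (∀ U ∈ 𝒰, (A.carrier ∩ U).Nonempty) →
        ∀ᶠ a in f, ∀ U ∈ 𝒰, ((m a).carrier ∩ U).Nonempty := by
  refine (tendsto_nhds_generateFrom_iff (β := CL X)).trans ?_
  constructor
  · intro h
    exact ⟨fun U hU hA => h _ (Or.inl ⟨U, hU, rfl⟩) hA,
      fun 𝒰 hU hlf hA => h _ (Or.inr ⟨𝒰, hU, hlf, rfl⟩) hA⟩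
  · rintro ⟨hplus, hminus⟩ S (⟨U, hU, rfl⟩ | ⟨𝒰, hU, hlf, rfl⟩) hA
    exacts [hplus U hU hA, hminus 𝒰 hU hlf hA]

theorem setOf_subset_mem_nhds {A : CL X} {U : Set X} (hU : U ∈ 𝓝ˢ A.carrier) :
    {C : CL X | C.carrier ⊆ U} ∈ 𝓝 A := by
  have hopen : IsOpen {C : CL X | C.carrier ⊆ interior U} :=
    isOpen_generateFrom_of_mem (Or.inl ⟨_, isOpen_interior, rfl⟩)
  exact mem_of_superset (hopen.mem_nhds (subset_interior_iff_mem_nhdsSet.2 hU))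
    fun C hC => hC.trans interior_subset

theorem setOf_forall_inter_nonempty_mem_nhds {A : CL X} {ι : Type*} {U : ι → Set X}
    (hUo : ∀ i, IsOpen (U i)) (hU : LocallyFinite U) (hA : ∀ i, (A.carrier ∩ U i).Nonempty) :
    {C : CL X | ∀ i, (C.carrier ∩ U i).Nonempty} ∈ 𝓝 A := by
  have hopen : IsOpen {C : CL X | ∀ V ∈ range U, (C.carrier ∩ V).Nonempty} :=
    isOpen_generateFrom_of_mem (Or.inr ⟨_, forall_mem_range.2 hUo, hU.on_range, rfl⟩)
  simpa only [forall_mem_range] using hopen.mem_nhds (forall_mem_range.2 hA)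

theorem setOf_inter_nonempty_mem_nhds {A : CL X} {x : X} {V : Set X} (hV : V ∈ 𝓝 x)
    (hx : x ∈ A.carrier) : {C : CL X | (C.carrier ∩ V).Nonempty} ∈ 𝓝 A := by
  have := setOf_forall_inter_nonempty_mem_nhds (A := A) (U := fun _ : Unit => interior V)
    (fun _ => isOpen_interior) (locallyFinite_of_finite _)
    (fun _ => ⟨x, hx, mem_interior_iff_mem_nhds.2 hV⟩)
  exact mem_of_superset this fun C hC => (hC ()).mono (inter_subset_inter_right _ interior_subset)

theorem mem_closure_iUnion_of_tendsto {ι : Type*} {l : Filter ι} [l.NeBot] {C : ι → CL X}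
    {A : CL X} (h : Tendsto C l (𝓝 A)) {x : X} (hx : x ∈ A.carrier) :
    x ∈ closure (⋃ i, (C i).carrier) := by
  refine mem_closure_iff.2 fun W hW hxW => ?_
  obtain ⟨i, y, hyC, hyW⟩ :=
    (h.eventually (setOf_inter_nonempty_mem_nhds (hW.mem_nhds hxW) hx)).exists
  exact ⟨y, hyW, mem_iUnion.2 ⟨i, hyC⟩⟩

end CL

theorem D1Space.isCountablyGenerated_nhdsSet (hd : D1Space X) {A : Set X} (hA : IsClosed A) :
    (𝓝ˢ A).IsCountablyGenerated := by
  rcases A.eq_empty_or_nonempty with rfl | hne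
  · rw [nhdsSet_empty]
    exact isCountablyGenerated_bot
  obtain ⟨B, hBA, hB⟩ := hd A hA hne
  refine HasBasis.isCountablyGenerated (p := fun _ : ℕ => True) ((hasBasis_nhdsSet A).to_hasBasis
    (fun U hU => (hB U hU.1 hU.2).imp fun _ h => ⟨trivial, h⟩) fun n _ => ⟨B n, hBA n, le_rfl⟩)

theorem D1Space.of_isCountablyGenerated_nhdsSet
    (h : ∀ A : Set X, IsClosed A → A.Nonempty → (𝓝ˢ A).IsCountablyGenerated) : D1Space X := by
  intro A hA hne
  have := h A hA hne
  obtain ⟨B, hBA, hB⟩ := (hasBasis_nhdsSet A).exists_antitone_subbasis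
  exact ⟨B, fun n => hBA n, fun U hU hAU => hB.mem_iff.1 (hU.mem_nhdsSet.2 hAU)⟩

theorem exists_ne_of_mem_NI {x : X} (hx : x ∈ NI X) {O : Set X} (hO : O ∈ 𝓝 x) :
    ∃ y ∈ O, y ≠ x := by
  have : (𝓝[≠] x).NeBot := neBot_iff.2 ((isOpen_singleton_iff_punctured_nhds x).not.1 hx)
  exact (Eventually.and (nhdsWithin_le_nhds hO) (self_mem_nhdsWithin (s := {x}ᶜ))).exists

theorem isClosed_image_of_locallyFinite [T1Space X] {ι : Type*} {W : ι → Set X}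
    (hW : LocallyFinite W) {v : ι → X} (hv : ∀ i, v i ∈ W i) (J : Set ι) : IsClosed (v '' J) := by
  rw [image_eq_range, ← iUnion_singleton_eq_range]
  exact ((hW.subset fun i => singleton_subset_iff.2 (hv i)).comp_injective
    Subtype.val_injective).isClosed_iUnion fun _ => isClosed_singleton

theorem D1Space.finite_setOf_inter_NI_nonempty [T1Space X] (hd : D1Space X) {ι : Type*}
    {U : ι → Set X} (hUo : ∀ i, IsOpen (U i)) (hU : LocallyFinite U) :
    {i | (U i ∩ NI X).Nonempty}.Finite := by
  by_contra hinf
  let g := Set.Infinite.natEmbedding _ hinf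
  choose v hvW hvNI using fun n => (g n).2
  have hW : LocallyFinite fun n => U (g n) :=
    hU.comp_injective (Subtype.val_injective.comp g.injective)
  have := hd.isCountablyGenerated_nhdsSet (isClosed_image_of_locallyFinite hW hvW univ)
  obtain ⟨G, hG⟩ := (𝓝ˢ (v '' univ)).exists_antitone_basis
  -- `v n` is not isolated, so near it there are points outside the closed discrete set `range v`.
  have hq : ∀ n, ∃ q ∈ G n ∩ U (g n), q ∉ range v := by
    intro n
    have hO : G n ∩ U (g n) ∩ (v '' {m | v m ≠ v n})ᶜ ∈ 𝓝 (v n) := by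
      refine inter_mem (inter_mem (mem_nhdsSet_iff_forall.1 (hG.mem n) _ ⟨n, trivial, rfl⟩)
        ((hUo _).mem_nhds (hvW n)))
        ((isClosed_image_of_locallyFinite hW hvW _).isOpen_compl.mem_nhds ?_)
      rintro ⟨m, hm, hmn⟩
      exact hm hmn
    obtain ⟨q, ⟨hqG, hq⟩, hqn⟩ := exists_ne_of_mem_NI (hvNI n) hO
    refine ⟨q, hqG, ?_⟩
    rintro ⟨m, rfl⟩
    exact hq ⟨m, hqn, rfl⟩
  choose q hqGW hqv using hq
  obtain ⟨n, hn⟩ := hG.mem_iff.1 ((isClosed_image_of_locallyFinite hW (fun n => (hqGW n).2)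
    univ).isOpen_compl.mem_nhdsSet.2 (by rintro _ ⟨m, -, rfl⟩ ⟨k, -, hk⟩; exact hqv k ⟨m, hk.symm⟩))
  exact hn (hqGW n).1 ⟨n, trivial, rfl⟩

def CL.insert [T1Space X] (x : X) (A : CL X) : CL X :=
  ⟨Insert.insert x A.carrier, insert_nonempty _ _,
    insert_eq x A.carrier ▸ isClosed_singleton.union A.isClosed'⟩

theorem CL.nhdsSet_eq_comap_insert [T1Space X] (A : CL X) :
    𝓝ˢ A.carrier = comap (CL.insert · A) (𝓝 A) := by
  refine le_antisymm (tendsto_iff_comap.1 (CL.tendsto_nhds_iff.2 ⟨?_, ?_⟩)) fun U hU => ?_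
  · intro U hU hAU
    filter_upwards [hU.mem_nhdsSet.2 hAU] with x hx using insert_subset hx hAU
  · intro 𝒰 _ _ hA
    exact .of_forall fun x U hU => (hA U hU).mono (inter_subset_inter_left _ (subset_insert _ _))
  · exact ⟨_, CL.setOf_subset_mem_nhds hU, fun x hx => hx (mem_insert x _)⟩

theorem D1Space.of_firstCountableTopology_CL [T1Space X] [FirstCountableTopology (CL X)] :
    D1Space X :=
  of_isCountablyGenerated_nhdsSet fun A hA hne => by
    rw [show 𝓝ˢ A = _ from CL.nhdsSet_eq_comap_insert ⟨A, hne, hA⟩]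
    infer_instance

theorem hereditarilySeparable_NI_of_firstCountableTopology_CL [T1Space X]
    [FirstCountableTopology (CL X)] : HereditarilySeparable (NI X) := by
  have hd : D1Space X := .of_firstCountableTopology_CL
  intro s hs
  rcases s.eq_empty_or_nonempty with rfl | ⟨x₀, hx₀⟩
  · exact ⟨∅, subset_rfl, countable_empty, empty_subset _⟩
  let A : CL X := ⟨closure s, ⟨x₀, subset_closure hx₀⟩, isClosed_closure⟩
  let m : Finset s → CL X := fun T =>
    ⟨closure (insert x₀ (Subtype.val '' (T : Set s))), (insert_nonempty _ _).closure,
      isClosed_closure⟩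
  have hms : ∀ T, insert x₀ (Subtype.val '' (T : Set s)) ⊆ s := fun T =>
    insert_subset hx₀ (image_subset_iff.2 fun y _ => y.2)
  have hm : Tendsto m atTop (𝓝 A) := by
    refine CL.tendsto_nhds_iff.2 ⟨fun U _ hU => .of_forall fun T => (closure_mono (hms T)).trans hU,
      fun 𝒰 hUo hlf hA => ?_⟩
    have hmeet : ∀ U : 𝒰, (s ∩ U).Nonempty := fun U =>
      (closure_inter_open_nonempty_iff (hUo U U.2)).1 (hA U U.2)
    have : Finite 𝒰 := by
      refine finite_univ_iff.1 ((hd.finite_setOf_inter_NI_nonempty (fun U : 𝒰 => hUo U U.2)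
        hlf).subset fun U _ => ?_)
      obtain ⟨y, hys, hyU⟩ := hmeet U
      exact ⟨y, hyU, hs hys⟩
    choose t hts htU using hmeet
    filter_upwards [eventually_ge_atTop (finite_range fun U => (⟨t U, hts U⟩ : s)).toFinset]
      with T hT U hU
    exact ⟨t ⟨U, hU⟩, subset_closure (mem_insert_of_mem _
      ⟨_, hT ((Finite.mem_toFinset _).2 ⟨⟨U, hU⟩, rfl⟩), rfl⟩), htU ⟨U, hU⟩⟩
  have : (comap m (𝓝 A)).NeBot := neBot_of_le hm.le_comap
  obtain ⟨T, hT⟩ := exists_seq_tendsto (comap m (𝓝 A))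
  refine ⟨⋃ n, insert x₀ (Subtype.val '' (T n : Set s)), iUnion_subset fun n => hms (T n),
    countable_iUnion fun n => (((T n).finite_toSet.image _).insert x₀).countable, fun x hx => ?_⟩
  exact closure_minimal (iUnion_subset fun n => closure_mono (subset_iUnion _ n)) isClosed_closure
    (CL.mem_closure_iUnion_of_tendsto (tendsto_comap_iff.1 hT) (subset_closure hx))

theorem exists_mem_nhdsSet_forall_inter_diff_nonempty [T1Space X] {I R : Set X}
    (hRI : Disjoint R I) {ι : Type*} {W : ι → Set X} (hW : LocallyFinite W)
    (hWI : ∀ i, (W i ∩ I).Nonempty) : ∃ K ∈ 𝓝ˢ R, ∀ i, (W i ∩ (I \ K)).Nonempty := by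
  choose a haW haI using hWI
  refine ⟨(a '' univ)ᶜ, (isClosed_image_of_locallyFinite hW haW univ).isOpen_compl.mem_nhdsSet.2 ?_,
    fun i => ⟨a i, haW i, haI i, not_notMem.2 ⟨i, trivial, rfl⟩⟩⟩
  rintro z hz ⟨i, -, rfl⟩
  exact hRI.ne_of_mem hz (haI i) rfl

theorem locallyFinite_singleton_diff {I K : Set X} (hI : ∀ a ∈ I, IsOpen {a})
    (hK : K ∈ 𝓝ˢ (closure I \ I)) : LocallyFinite fun a : ↥(I \ K) => ({a.1} : Set X) := by
  intro z
  by_cases hzI : z ∈ I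
  · refine ⟨{z}, (hI z hzI).mem_nhds rfl, Subsingleton.finite fun a ha b hb => Subtype.ext ?_⟩
    obtain ⟨_, rfl, rfl⟩ := ha
    obtain ⟨_, rfl, hb⟩ := hb
    exact hb.symm
  by_cases hzcl : z ∈ closure I
  · refine ⟨K, mem_nhdsSet_iff_forall.1 hK z ⟨hzcl, hzI⟩, ?_⟩
    convert finite_empty
    exact eq_empty_of_forall_notMem fun a ⟨_, rfl, haK⟩ => a.2.2 haK
  · refine ⟨(closure I)ᶜ, isClosed_closure.isOpen_compl.mem_nhds hzcl, ?_⟩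
    convert finite_empty
    exact eq_empty_of_forall_notMem fun a ⟨_, rfl, ha⟩ => ha (subset_closure a.2.1)

/-- Only finitely many members of `𝒱` meet `A ∩ NI X`, and each of them is hit by a neighbourhood
of a point of `c`; the others meet `A` only in isolated points. -/
theorem D1Space.eventually_forall_inter_nonempty [T1Space X] (hd : D1Space X)
    {F : Filter (CL X)} {A c : Set X} (hAc : A ∩ NI X ⊆ closure c)
    (hc : ∀ x ∈ c, ∀ V ∈ 𝓝 x, ∀ᶠ C in F, (C.carrier ∩ V).Nonempty)
    (hF : ∀ K ∈ 𝓝ˢ (closure (A \ NI X) \ (A \ NI X)), ∀ᶠ C in F, (A \ NI X) \ K ⊆ C.carrier)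
    {𝒱 : Set (Set X)} (hVo : ∀ V ∈ 𝒱, IsOpen V) (hlf : LocallyFinite (fun V : 𝒱 => (V : Set X)))
    (hA : ∀ V ∈ 𝒱, (A ∩ V).Nonempty) : ∀ᶠ C in F, ∀ V ∈ 𝒱, (C.carrier ∩ V).Nonempty := by
  set 𝒱₁ := {V ∈ 𝒱 | (V ∩ (A ∩ NI X)).Nonempty}
  have h𝒱₁ : 𝒱₁.Finite := by
    refine ((hd.finite_setOf_inter_NI_nonempty (fun V : 𝒱 => hVo V V.2) hlf).image
      Subtype.val).subset ?_
    rintro V ⟨hV, y, hyV, -, hy⟩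
    exact ⟨⟨V, hV⟩, ⟨y, hyV, hy⟩, rfl⟩
  have h₁ : ∀ᶠ C in F, ∀ V ∈ 𝒱₁, (C.carrier ∩ V).Nonempty := by
    refine (eventually_all_finite h𝒱₁).2 fun V ⟨hV, y, hyV, hyA⟩ => ?_
    obtain ⟨x, hxV, hxc⟩ := mem_closure_iff.1 (hAc hyA) V (hVo V hV) hyV
    exact hc x hxc V ((hVo V hV).mem_nhds hxV)
  obtain ⟨K, hK, hKI⟩ := exists_mem_nhdsSet_forall_inter_diff_nonempty
    (disjoint_sdiff_left (t := closure (A \ NI X)) (s := A \ NI X))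
    (hlf.comp_injective (Subtype.val_injective (p := fun V : 𝒱 => V.1 ∉ 𝒱₁)))
    fun V => by
      obtain ⟨y, hyA, hyV⟩ := hA V V.1.2
      exact ⟨y, hyV, hyA, fun hy => V.2 ⟨V.1.2, y, hyV, hyA, hy⟩⟩
  filter_upwards [h₁, hF K hK] with C hC₁ hCK V hV
  by_cases h : V ∈ 𝒱₁
  · exact hC₁ V h
  · obtain ⟨a, haV, haI⟩ := hKI ⟨⟨V, hV⟩, h⟩
    exact ⟨a, hCK haI, haV⟩

theorem CL.isCountablyGenerated_nhds [T1Space X] (hd : D1Space X)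
    (hh : HereditarilySeparable (NI X)) (A : CL X) : (𝓝 A).IsCountablyGenerated := by
  have (x : X) : (𝓝 x).IsCountablyGenerated :=
    nhdsSet_singleton (x := x) ▸ hd.isCountablyGenerated_nhdsSet isClosed_singleton
  choose N hN using fun x : X => (𝓝 x).exists_antitone_basis
  have := hd.isCountablyGenerated_nhdsSet A.isClosed'
  obtain ⟨B, hB⟩ := (𝓝ˢ A.carrier).exists_antitone_basis
  set I := A.carrier \ NI X
  have hI : ∀ a ∈ I, IsOpen {a} := fun a ha => not_not.1 ha.2
  have hIo : IsOpen I := biUnion_of_singleton I ▸ isOpen_biUnion hI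
  have := hd.isCountablyGenerated_nhdsSet ((isClosed_closure (s := I)).sdiff hIo)
  obtain ⟨H, hH⟩ := (𝓝ˢ (closure I \ I)).exists_antitone_basis
  obtain ⟨c, hcA, hc, hAc⟩ := hh (A.carrier ∩ NI X) inter_subset_right
  let 𝒢 : Set (Set (CL X)) := range (fun n => {C | C.carrier ⊆ B n}) ∪
    (⋃ x ∈ c, range fun i => {C | (C.carrier ∩ N x i).Nonempty}) ∪
    range fun u => {C | I \ H u ⊆ C.carrier}
  refine ⟨𝒢, ((countable_range _).union (hc.biUnion fun _ _ => countable_range _)).union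
    (countable_range _), le_antisymm (le_generate_iff.2 ?_) (tendsto_id'.1 ?_)⟩
  · rintro _ ((⟨n, rfl⟩ | hS) | ⟨u, rfl⟩)
    · exact CL.setOf_subset_mem_nhds (hB.mem n)
    · obtain ⟨x, hx, i, rfl⟩ := mem_iUnion₂.1 hS
      exact CL.setOf_inter_nonempty_mem_nhds ((hN x).mem i) (hcA hx).1
    · simpa only [inter_singleton_nonempty, Subtype.forall, Filter.mem_sets, subset_def] using
        CL.setOf_forall_inter_nonempty_mem_nhds (A := A) (fun a : ↥(I \ H u) => hI a.1 a.2.1)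
          (locallyFinite_singleton_diff hI (hH.mem u)) fun a : ↥(I \ H u) => ⟨a.1, a.2.1.1, rfl⟩
  refine CL.tendsto_nhds_iff.2 ⟨fun U hU hAU => ?_, fun 𝒱 hVo hlf hA =>
    hd.eventually_forall_inter_nonempty hAc (fun x hx V hV => ?_) (fun K hK => ?_) hVo hlf hA⟩
  · obtain ⟨n, hn⟩ := hB.mem_iff.1 (hU.mem_nhdsSet.2 hAU)
    exact mem_of_superset (mem_generate_of_mem (Or.inl (Or.inl ⟨n, rfl⟩))) fun C hC => hC.trans hn
  · obtain ⟨i, hi⟩ := (hN x).mem_iff.1 hV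
    exact mem_of_superset (mem_generate_of_mem (Or.inl (Or.inr (mem_iUnion₂.2 ⟨x, hx, i, rfl⟩))))
      fun C hC => hC.mono (inter_subset_inter_right _ hi)
  · obtain ⟨u, hu⟩ := hH.mem_iff.1 hK
    exact mem_of_superset (mem_generate_of_mem (Or.inr ⟨u, rfl⟩))
      fun C hC => (sdiff_subset_sdiff_right hu).trans hC

end

theorem firstCountable_CL_locFin_iff {X : Type*} [TopologicalSpace X] [T2Space X] :
    FirstCountableTopology (CL X) ↔
      (D1Space X ∧ HereditarilySeparable (NI X)) :=
  ⟨fun _ => ⟨.of_firstCountableTopology_CL, hereditarilySeparable_NI_of_firstCountableTopology_CL⟩,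
    fun ⟨hd, hh⟩ => ⟨CL.isCountablyGenerated_nhds hd hh⟩⟩
end

section
/- For a Hausdorff space X, the hyperspace (CL(X), τ_locfin) has a countable network (is cosmic) if and only if X is compact and metrizable. -/
open Set TopologicalSpace

/-- A space is cosmic if it has a countable network. -/
def HasCountableNetwork (Y : Type*) [TopologicalSpace Y] : Prop :=
  ∃ N : Set (Set Y), N.Countable ∧
    ∀ y : Y, ∀ U : Set Y, IsOpen U → y ∈ U → ∃ s ∈ N, y ∈ s ∧ s ⊆ U

/-!
If `CL X` is cosmic, so is `X` (through `x ↦ {x}`), hence `X` is Lindelöf. If `X` were not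
compact, it would not be countably compact and would contain an infinite closed discrete set `D`.
The uncountably many nonempty `S ⊆ D` are points of `CL X`, and `S` lies in the open
neighbourhood `{A | A ⊆ (D \ T)ᶜ}` of `T` only when `S ⊆ T`, so no countable network can serve
all of them.
A compact Hausdorff cosmic space is second countable, hence metrizable.

Conversely, a compact set meets only finitely many members of a locally finite family, so the
Vietoris topology on the nonempty compact sets is finer than the locally finite topology; for
compact `X` this is a continuous surjection onto `CL X` from a second countable space.
-/

open Function

section Network

variable {X Y : Type*} [TopologicalSpace X] [TopologicalSpace Y]

def IsNetwork (N : Set (Set X)) : Prop :=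
  ∀ x : X, ∀ U : Set X, IsOpen U → x ∈ U → ∃ s ∈ N, x ∈ s ∧ s ⊆ U

theorem TopologicalSpace.IsTopologicalBasis.isNetwork {B : Set (Set X)}
    (hB : IsTopologicalBasis B) : IsNetwork B :=
  fun _ _ hU hx => hB.exists_subset_of_mem_open hx hU

theorem HasCountableNetwork.of_secondCountableTopology [SecondCountableTopology X] :
    HasCountableNetwork X := by
  obtain ⟨B, hBc, -, hB⟩ := exists_countable_basis X
  exact ⟨B, hBc, hB.isNetwork⟩

theorem HasCountableNetwork.of_continuous_surjective (h : HasCountableNetwork X) {f : X → Y}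
    (hf : Continuous f) (hsurj : Surjective f) : HasCountableNetwork Y := by
  obtain ⟨N, hNc, hN⟩ := h
  refine ⟨(f '' ·) '' N, hNc.image _, fun y U hU hy => ?_⟩
  obtain ⟨x, rfl⟩ := hsurj y
  obtain ⟨s, hs, hxs, hsU⟩ := hN x _ (hU.preimage hf) hy
  exact ⟨f '' s, mem_image_of_mem _ hs, mem_image_of_mem _ hxs, image_subset_iff.2 hsU⟩

theorem HasCountableNetwork.of_induced_le (h : HasCountableNetwork Y) {f : X → Y}
    (hf : induced f ‹TopologicalSpace Y› ≤ ‹TopologicalSpace X›) : HasCountableNetwork X := by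
  obtain ⟨N, hNc, hN⟩ := h
  refine ⟨(f ⁻¹' ·) '' N, hNc.image _, fun x U hU hx => ?_⟩
  obtain ⟨V, hV, rfl⟩ := isOpen_induced_iff.1 (hf U hU)
  obtain ⟨s, hs, hxs, hsV⟩ := hN (f x) V hV hx
  exact ⟨f ⁻¹' s, mem_image_of_mem _ hs, hxs, preimage_mono hsV⟩

theorem HasCountableNetwork.lindelofSpace (h : HasCountableNetwork X) : LindelofSpace X := by
  obtain ⟨N, hNc, hN⟩ := h
  refine ⟨isLindelof_iff_countable_subcover.2 fun U hUo hcover => ?_⟩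
  choose idx hidx using fun s : {s ∈ N | ∃ i, s ⊆ U i} => s.2.2
  have : Countable {s ∈ N | ∃ i, s ⊆ U i} := (hNc.mono (sep_subset _ _)).to_subtype
  refine ⟨range idx, countable_range idx, fun x _ => ?_⟩
  obtain ⟨i, hi⟩ := mem_iUnion.1 (hcover (mem_univ x))
  obtain ⟨s, hs, hxs, hsU⟩ := hN x (U i) (hUo i) hi
  exact mem_biUnion (mem_range_self ⟨s, hs, i, hsU⟩) (hidx _ hxs)

theorem HasCountableNetwork.countable_of_antisymm {ι : Type*} (h : HasCountableNetwork X)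
    {x : ι → X} {W : ι → Set X} (hW : ∀ i, IsOpen (W i)) (hxW : ∀ i, x i ∈ W i)
    (hanti : ∀ i j, x i ∈ W j → x j ∈ W i → i = j) : Countable ι := by
  obtain ⟨N, hNc, hN⟩ := h
  choose s hsN hxs hsW using fun i => hN (x i) (W i) (hW i) (hxW i)
  have : Countable N := hNc.to_subtype
  refine Injective.countable (f := fun i => (⟨s i, hsN i⟩ : N)) fun i j hij => ?_
  have hs : s i = s j := congrArg Subtype.val hij
  exact hanti i j (hsW j (hs ▸ hxs i)) (hsW i (hs ▸ hxs j))

theorem IsNetwork.exists_closure_subset [RegularSpace X] {N : Set (Set X)} (hN : IsNetwork N)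
    {x : X} {U : Set X} (hU : IsOpen U) (hx : x ∈ U) : ∃ s ∈ N, x ∈ s ∧ closure s ⊆ U := by
  obtain ⟨C, hC, hCcl, hCU⟩ := exists_mem_nhds_isClosed_subset (hU.mem_nhds hx)
  obtain ⟨s, hs, hxs, hsC⟩ := hN x (interior C) isOpen_interior (mem_interior_iff_mem_nhds.2 hC)
  exact ⟨s, hs, hxs, (closure_minimal (hsC.trans interior_subset) hCcl).trans hCU⟩

/-- Separating the pairs of network elements with disjoint closures gives countably many open
sets, which generate a coarser Hausdorff topology; a compact topology has no strictly coarser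
Hausdorff topology. -/
theorem HasCountableNetwork.secondCountableTopology [CompactSpace X] [T2Space X]
    (h : HasCountableNetwork X) : SecondCountableTopology X := by
  obtain ⟨N, hNc, hN⟩ := h
  set P := {p : Set X × Set X | p ∈ N ×ˢ N ∧ Disjoint (closure p.1) (closure p.2)}
  have hPc : P.Countable := (hNc.prod hNc).mono fun p hp => hp.1
  choose! u v hu hv hpu hpv huv using fun p (hp : p ∈ P) =>
    normal_separation isClosed_closure isClosed_closure hp.2
  set 𝒢 := u '' P ∪ v '' P
  have h𝒢 : ∀ G ∈ 𝒢, IsOpen G := by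
    rintro _ (⟨p, hp, rfl⟩ | ⟨p, hp, rfl⟩)
    exacts [hu p hp, hv p hp]
  have ht2 : @T2Space X (generateFrom 𝒢) := by
    refine @T2Space.mk X (generateFrom 𝒢) fun x y hxy => ?_
    obtain ⟨U, V, hU, hV, hxU, hyV, hUV⟩ := t2_separation hxy
    obtain ⟨s, hs, hxs, hsU⟩ := IsNetwork.exists_closure_subset hN hU hxU
    obtain ⟨t, ht, hyt, htV⟩ := IsNetwork.exists_closure_subset hN hV hyV
    have hp : (s, t) ∈ P := ⟨⟨hs, ht⟩, hUV.mono hsU htV⟩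
    exact ⟨u (s, t), v (s, t), isOpen_generateFrom_of_mem (Or.inl ⟨_, hp, rfl⟩),
      isOpen_generateFrom_of_mem (Or.inr ⟨_, hp, rfl⟩), hpu _ hp (subset_closure hxs),
      hpv _ hp (subset_closure hyt), huv _ hp⟩
  have hclosed : @IsClosedMap X X _ (generateFrom 𝒢) id :=
    @Continuous.isClosedMap X X _ (generateFrom 𝒢) _ ht2 id
      (continuous_id_iff_le.2 (le_generateFrom h𝒢))
  refine ⟨⟨𝒢, (hPc.image u).union (hPc.image v),
    le_antisymm (le_generateFrom h𝒢) fun U hU => ?_⟩⟩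
  simpa using (hclosed _ hU.isClosed_compl).isOpen_compl

end Network

theorem Set.Infinite.not_countable_powerset {α : Type*} {D : Set α} (hD : D.Infinite) :
    ¬ (𝒫 D).Countable := by
  intro hc
  set e : ℕ ↪ D := Set.Infinite.natEmbedding D hD
  have he : Injective (Subtype.val ∘ e) := Subtype.val_injective.comp e.injective
  have : (univ : Set (Set ℕ)).Countable := (hc.image ((Subtype.val ∘ e) ⁻¹' ·)).mono fun T _ => by
    rw [← preimage_image_eq T he]
    exact mem_image_of_mem _ (image_subset_iff.2 fun n _ => (e n).2)
  obtain ⟨f, hf⟩ := (countable_univ_iff.1 this).exists_injective_nat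
  exact cantor_injective f hf

theorem exists_infinite_forall_subset_isClosed_of_not_compactSpace {X : Type*}
    [TopologicalSpace X] [T1Space X] [LindelofSpace X] (hX : ¬ CompactSpace X) :
    ∃ D : Set X, D.Infinite ∧ ∀ S ⊆ D, IsClosed S := by
  have hcc : ¬ IsCountablyCompact (univ : Set X) := fun h =>
    hX (@LindelofSpace.compactSpace X _ _ ⟨h⟩)
  rw [isCountablyCompact_iff_infinite_subset_has_accPt] at hcc
  push Not at hcc
  obtain ⟨D, -, hD, hacc⟩ := hcc
  exact ⟨D, hD, fun S hS => (isClosed_iff_derivedSet_subset S).2 fun x hx =>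
    (hacc x (mem_univ x) (derivedSet_mono S D hS hx)).elim⟩

theorem LocallyFinite.finite_of_forall_inter_nonempty {ι X : Type*} [TopologicalSpace X]
    {f : ι → Set X} (hf : LocallyFinite f) {K : Set X} (hK : IsCompact K)
    (h : ∀ i, (f i ∩ K).Nonempty) : Finite ι :=
  finite_univ_iff.1 (by simpa [h] using hf.finite_nonempty_inter_compact hK)

namespace CL

variable {X : Type*} [TopologicalSpace X]

theorem isOpen_setOf_carrier_subset {U : Set X} (hU : IsOpen U) :
    IsOpen {A : CL X | A.carrier ⊆ U} :=
  isOpen_generateFrom_of_mem (Or.inl ⟨U, hU, rfl⟩)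

def singleton [T1Space X] (x : X) : CL X := ⟨{x}, singleton_nonempty x, isClosed_singleton⟩

theorem induced_singleton_le [T1Space X] :
    induced (singleton : X → CL X) inferInstance ≤ ‹TopologicalSpace X› := fun U hU =>
  isOpen_induced_iff.2 ⟨_, isOpen_setOf_carrier_subset hU, by ext; simp [singleton]⟩

theorem not_hasCountableNetwork_of_infinite [T1Space X] {D : Set X} (hD : D.Infinite)
    (hDcl : ∀ S ⊆ D, IsClosed S) : ¬ HasCountableNetwork (CL X) := by
  intro h
  set 𝒮 := {S : Set X | S ⊆ D ∧ S.Nonempty}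
  have : Countable 𝒮 := h.countable_of_antisymm
    (x := fun S => ⟨S, S.2.2, hDcl S S.2.1⟩) (W := fun S => {A | A.carrier ⊆ (D \ S)ᶜ})
    (fun S => isOpen_setOf_carrier_subset (hDcl _ sdiff_subset).isOpen_compl)
    (fun S x hxS hxD => hxD.2 hxS)
    (fun S T hST hTS => Subtype.ext <| subset_antisymm
      (fun x hx => by_contra fun hxT => hST hx ⟨S.2.1 hx, hxT⟩)
      (fun x hx => by_contra fun hxS => hTS hx ⟨T.2.1 hx, hxS⟩))
  refine hD.not_countable_powerset ((countable_coe_iff.1 this).insert ∅ |>.mono fun S hS => ?_)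
  rcases S.eq_empty_or_nonempty with rfl | hne
  exacts [mem_insert _ _, mem_insert_of_mem _ ⟨hS, hne⟩]

theorem compactSpace_of_hasCountableNetwork [T1Space X] (h : HasCountableNetwork (CL X)) :
    CompactSpace X := by
  have : LindelofSpace X := (h.of_induced_le induced_singleton_le).lindelofSpace
  by_contra hX
  obtain ⟨D, hD, hDcl⟩ := exists_infinite_forall_subset_isClosed_of_not_compactSpace hX
  exact not_hasCountableNetwork_of_infinite hD hDcl h

def ofNonemptyCompacts [T2Space X] (K : NonemptyCompacts X) : CL X :=
  ⟨K, K.nonempty, K.isCompact.isClosed⟩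

theorem surjective_ofNonemptyCompacts [T2Space X] [CompactSpace X] :
    Surjective (ofNonemptyCompacts (X := X)) := fun A =>
  ⟨⟨⟨A.carrier, A.isClosed'.isCompact⟩, A.nonempty'⟩, rfl⟩

theorem continuous_ofNonemptyCompacts [T2Space X] :
    Continuous (ofNonemptyCompacts (X := X)) := by
  refine continuous_generateFrom_iff.2 ?_
  rintro _ (⟨U, hU, rfl⟩ | ⟨𝒰, h𝒰, hlf, rfl⟩)
  · exact NonemptyCompacts.isOpen_subsets_of_isOpen hU
  by_cases hfin : 𝒰.Finite
  · have : ofNonemptyCompacts ⁻¹' {A : CL X | ∀ U ∈ 𝒰, (A.carrier ∩ U).Nonempty} =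
        ⋂ U ∈ 𝒰, {K : NonemptyCompacts X | ((K : Set X) ∩ U).Nonempty} := by
      ext; simp [ofNonemptyCompacts]
    rw [this]
    exact hfin.isOpen_biInter fun U hU => NonemptyCompacts.isOpen_inter_nonempty_of_isOpen (h𝒰 U hU)
  · convert isOpen_empty
    refine eq_empty_iff_forall_notMem.2 fun K hK => hfin (finite_coe_iff.1 ?_)
    exact hlf.finite_of_forall_inter_nonempty K.isCompact fun U => inter_comm _ _ ▸ hK U U.2

end CL

theorem cosmic_CL_locFin_iff {X : Type*} [TopologicalSpace X] [T2Space X] :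
    HasCountableNetwork (CL X) ↔
      (CompactSpace X ∧ TopologicalSpace.MetrizableSpace X) := by
  constructor
  · intro h
    have : CompactSpace X := CL.compactSpace_of_hasCountableNetwork h
    have : SecondCountableTopology X :=
      (h.of_induced_le CL.induced_singleton_le).secondCountableTopology
    exact ⟨‹_›, metrizableSpace_of_t3_secondCountable X⟩
  · rintro ⟨_, _⟩
    have : SecondCountableTopology X := by
      let := metrizableSpaceMetric X
      infer_instance
    exact HasCountableNetwork.of_secondCountableTopology.of_continuous_surjective
      CL.continuous_ofNonemptyCompacts CL.surjective_ofNonemptyCompacts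
end
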